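/- Let B_N(x) = (α/x) Σ_{n=0}^{N} a_n x^{−3n} be the N-th partial sum of the formal series with coefficients a_n satisfying a₀ = 1 and a_{n+1} = (3n+1)(3n+2)a_n − 2α² Σ_{k+l+m=n} a_k a_l a_m. Then B_N''(x) − 2B_N(x)³ − x·B_N(x) + α = O(x^{−3N−3}) as x → +∞; i.e. the formal series is a formal solution of Painlevé II. -/

import Mathlib

open Finset Filter Asymptotics

lemma hasDerivAt_inv_pow_aux (k : ℕ) {x : ℝ} (hx : x ≠ 0) :
    HasDerivAt (fun y : ℝ => (y⁻¹) ^ k) (-(k:ℝ) * (x⁻¹) ^ (k+1)) x := by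
  have e1 : ∀ (m : ℕ) (y : ℝ), y ^ (-(m:ℤ)) = (y⁻¹) ^ m := by
    intro m y; rw [zpow_neg, ← inv_zpow, zpow_natCast]
  have h := hasDerivAt_zpow (-(k:ℤ)) x (Or.inl hx)
  have e2 : (-(k:ℤ)) - 1 = -((k+1 : ℕ) : ℤ) := by push_cast; ring
  rw [e2] at h
  simp only [e1] at h
  have e3 : ((-(k:ℤ) : ℤ) : ℝ) = -(k:ℝ) := by push_cast; ring
  rwa [e3] at h

lemma triple_reindex {M : Type*} [AddCommMonoid M] (N : ℕ) (g : ℕ → ℕ → ℕ → M) :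
    ∑ n ∈ Finset.range N, ∑ k ∈ Finset.range (n+1), ∑ l ∈ Finset.range (n+1-k), g k l (n-k-l)
      = ∑ k ∈ Finset.range (N+1), ∑ l ∈ Finset.range (N+1), ∑ m ∈ Finset.range (N+1),
          if k+l+m < N then g k l m else 0 := by
  have hR : ∑ k ∈ Finset.range (N+1), ∑ l ∈ Finset.range (N+1), ∑ m ∈ Finset.range (N+1),
          (if k+l+m < N then g k l m else 0)
      = ∑ p ∈ ((Finset.range (N+1)) ×ˢ (Finset.range (N+1)) ×ˢ (Finset.range (N+1))).filter
          (fun p => p.1 + p.2.1 + p.2.2 < N), g p.1 p.2.1 p.2.2 := by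
    rw [Finset.sum_filter, Finset.sum_product]
    refine Finset.sum_congr rfl fun k _ => ?_
    rw [Finset.sum_product]
  rw [hR]
  have hL : ∑ n ∈ Finset.range N, ∑ k ∈ Finset.range (n+1), ∑ l ∈ Finset.range (n+1-k),
        g k l (n-k-l)
      = ∑ x ∈ (Finset.range N).sigma (fun n => (Finset.range (n+1)).sigma
          (fun k => Finset.range (n+1-k))),
          g x.2.1 x.2.2 (x.1 - x.2.1 - x.2.2) := by
    have step1 : ∀ n, ∑ k ∈ Finset.range (n+1), ∑ l ∈ Finset.range (n+1-k), g k l (n-k-l)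
        = ∑ y ∈ ((Finset.range (n+1)).sigma (fun k => Finset.range (n+1-k))
              : Finset ((_ : ℕ) × ℕ)), g y.1 y.2 (n - y.1 - y.2) :=
      fun n => Finset.sum_sigma' _ _ (fun k l => g k l (n - k - l))
    simp only [step1]
    exact Finset.sum_sigma' (Finset.range N)
      (fun n => (Finset.range (n+1)).sigma (fun k => Finset.range (n+1-k)))
      (fun n (y : (_ : ℕ) × ℕ) => g y.1 y.2 (n - y.1 - y.2))
  rw [hL]
  refine Finset.sum_nbij' (fun x => (x.2.1, x.2.2, x.1 - x.2.1 - x.2.2))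
    (fun p => ⟨p.1 + p.2.1 + p.2.2, p.1, p.2.1⟩) ?_ ?_ ?_ ?_ ?_
  · rintro ⟨n, k, l⟩ hm
    simp only [Finset.mem_sigma, Finset.mem_range] at hm
    simp only [Finset.mem_filter, Finset.mem_product, Finset.mem_range]
    omega
  · rintro ⟨k, l, m⟩ hm
    simp only [Finset.mem_filter, Finset.mem_product, Finset.mem_range] at hm
    simp only [Finset.mem_sigma, Finset.mem_range]
    omega
  · rintro ⟨n, k, l⟩ hm
    simp only [Finset.mem_sigma, Finset.mem_range] at hm
    have : k + l + (n - k - l) = n := by omega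
    simp [this]
  · rintro ⟨k, l, m⟩ hm
    simp only [Finset.mem_filter, Finset.mem_product, Finset.mem_range] at hm
    have : k + l + m - k - l = m := by omega
    simp [this]
  · rintro ⟨n, k, l⟩ _; rfl

/-- The partial sums `B_N(x) = (α/x) Σ_{n=0}^N a_n x^{−3n}` of the formal series
with coefficients given by the Painlevé II recursion satisfy
`B_N'' − 2B_N³ − x·B_N + α = O(x^{−3N−3})` as `x → +∞`. -/
theorem painleveII_formal_solution (α : ℝ) (a : ℕ → ℝ)
    (h0 : a 0 = 1)
    (hrec : ∀ n : ℕ, a (n + 1)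
      = (3 * n + 1) * (3 * n + 2) * a n
        - 2 * α ^ 2 * ∑ k ∈ Finset.range (n + 1), ∑ l ∈ Finset.range (n + 1 - k),
            a k * a l * a (n - k - l))
    (N : ℕ) (B : ℝ → ℝ)
    (hB : ∀ x : ℝ, B x = (α / x) * ∑ n ∈ Finset.range (N + 1), a n / x ^ (3 * n)) :
    (fun x : ℝ => deriv (deriv B) x - 2 * (B x) ^ 3 - x * B x + α)
      =O[atTop] fun x : ℝ => 1 / x ^ (3 * N + 3) := by
  set c : ℕ → ℝ := fun n => α * a n with hc_def
  have hc : ∀ n : ℕ, c (n+1) = ((3*(n:ℝ)+1)*(3*(n:ℝ)+2)) * c n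
      - 2 * ∑ k ∈ Finset.range (n+1), ∑ l ∈ Finset.range (n+1-k),
          c k * c l * c (n-k-l) := by
    intro n
    simp only [hc_def]
    rw [hrec n, mul_sub]
    congr 1
    · ring
    · simp only [Finset.mul_sum]
      refine Finset.sum_congr rfl fun k _ => Finset.sum_congr rfl fun l _ => by ring
  set g : ℝ → ℝ := fun x => ∑ n ∈ Finset.range (N+1), c n * (x⁻¹)^(3*n+1) with hg_def
  set g1 : ℝ → ℝ := fun x => ∑ n ∈ Finset.range (N+1),
      (c n * -((3*n+1 : ℕ):ℝ)) * (x⁻¹)^(3*n+2) with hg1_def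
  set g2 : ℝ → ℝ := fun x => ∑ n ∈ Finset.range (N+1),
      ((3*(n:ℝ)+1)*(3*(n:ℝ)+2)) * c n * (x⁻¹)^(3*n+3) with hg2_def
  have hBg : B = g := by
    funext x
    rw [hB x, hg_def]
    rcases eq_or_ne x 0 with h0x | hx
    · subst h0x
      simp
    · rw [Finset.mul_sum]
      refine Finset.sum_congr rfl fun n _ => ?_
      rw [pow_succ, inv_pow]
      field_simp
      rfl
  have hterm : ∀ (x : ℝ), x ≠ 0 → ∀ n : ℕ,
      HasDerivAt (fun y : ℝ => c n * (y⁻¹)^(3*n+1))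
        ((c n * -((3*n+1 : ℕ):ℝ)) * (x⁻¹)^(3*n+2)) x := by
    intro x hx n
    have h := (hasDerivAt_inv_pow_aux (3*n+1) hx).const_mul (c n)
    have e : 3*n+1+1 = 3*n+2 := by omega
    rw [e] at h
    exact h.congr_deriv (by ring)
  have h2term : ∀ (x : ℝ), x ≠ 0 → ∀ n : ℕ,
      HasDerivAt (fun y : ℝ => (c n * -((3*n+1 : ℕ):ℝ)) * (y⁻¹)^(3*n+2))
        (((3*(n:ℝ)+1)*(3*(n:ℝ)+2)) * c n * (x⁻¹)^(3*n+3)) x := by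
    intro x hx n
    have h := (hasDerivAt_inv_pow_aux (3*n+2) hx).const_mul (c n * -((3*n+1 : ℕ):ℝ))
    have e : 3*n+2+1 = 3*n+3 := by omega
    rw [e] at h
    exact h.congr_deriv (by push_cast; ring)
  have hderivB : ∀ x : ℝ, x ≠ 0 → deriv B x = g1 x := by
    intro x hx
    rw [hBg, hg_def, hg1_def]
    exact (HasDerivAt.fun_sum fun n _ => hterm x hx n).deriv
  have hderiv2 : ∀ x : ℝ, x ≠ 0 → deriv (deriv B) x = g2 x := by
    intro x hx
    have hev : deriv B =ᶠ[nhds x] g1 := by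
      filter_upwards [IsOpen.mem_nhds isOpen_compl_singleton hx] with y hy
      exact hderivB y hy
    rw [hev.deriv_eq, hg1_def, hg2_def]
    exact (HasDerivAt.fun_sum fun n _ => h2term x hx n).deriv
  have key : ∀ x : ℝ, x ≠ 0 → g2 x - 2 * (g x)^3 - x * g x + α
      = ((3*(N:ℝ)+1)*(3*(N:ℝ)+2)) * c N * (x⁻¹)^(3*N+3)
        - 2 * ∑ k ∈ Finset.range (N+1), ∑ l ∈ Finset.range (N+1), ∑ m ∈ Finset.range (N+1),
            (if N ≤ k+l+m then c k * c l * c m * (x⁻¹)^(3*(k+l+m)+3) else 0) := by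
    intro x hx
    have E1 : x * g x = α + ∑ n ∈ Finset.range N, c (n+1) * (x⁻¹)^(3*n+3) := by
      rw [hg_def]
      simp only [Finset.mul_sum]
      have hterm1 : ∀ n : ℕ, x * (c n * (x⁻¹)^(3*n+1)) = c n * (x⁻¹)^(3*n) := by
        intro n
        rw [pow_succ]
        field_simp
      simp only [hterm1]
      rw [Finset.sum_range_succ']
      have h00 : c 0 * (x⁻¹)^(3*0) = α := by simp [hc_def, h0]
      rw [h00, add_comm]
      congr 1
    have E2 : (g x)^3 = ∑ k ∈ Finset.range (N+1), ∑ l ∈ Finset.range (N+1),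
        ∑ m ∈ Finset.range (N+1), c k * c l * c m * (x⁻¹)^(3*(k+l+m)+3) := by
      rw [hg_def]
      simp only []
      rw [show (∑ n ∈ Finset.range (N+1), c n * (x⁻¹)^(3*n+1))^3
          = (∑ n ∈ Finset.range (N+1), c n * (x⁻¹)^(3*n+1)) *
            ((∑ n ∈ Finset.range (N+1), c n * (x⁻¹)^(3*n+1)) *
             (∑ n ∈ Finset.range (N+1), c n * (x⁻¹)^(3*n+1))) from by ring]
      rw [Finset.sum_mul_sum, Finset.sum_mul_sum]
      simp only [Finset.mul_sum]
      refine Finset.sum_congr rfl fun k _ => Finset.sum_congr rfl fun l _ =>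
        Finset.sum_congr rfl fun m _ => ?_
      rw [show 3*(k+l+m)+3 = (3*k+1)+((3*l+1)+(3*m+1)) from by ring, pow_add, pow_add]
      ring
    have E3 : ∑ n ∈ Finset.range N, c (n+1) * (x⁻¹)^(3*n+3)
        = ∑ n ∈ Finset.range N, ((3*(n:ℝ)+1)*(3*(n:ℝ)+2)) * c n * (x⁻¹)^(3*n+3)
          - 2 * ∑ k ∈ Finset.range (N+1), ∑ l ∈ Finset.range (N+1), ∑ m ∈ Finset.range (N+1),
              (if k+l+m < N then c k * c l * c m * (x⁻¹)^(3*(k+l+m)+3) else 0) := by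
      have per : ∀ n ∈ Finset.range N, c (n+1) * (x⁻¹)^(3*n+3)
          = ((3*(n:ℝ)+1)*(3*(n:ℝ)+2)) * c n * (x⁻¹)^(3*n+3)
            - 2 * ∑ k ∈ Finset.range (n+1), ∑ l ∈ Finset.range (n+1-k),
                (c k * c l * c (n-k-l)) * (x⁻¹)^(3*n+3) := by
        intro n _
        rw [hc n, sub_mul, mul_assoc 2]
        simp only [Finset.sum_mul]
      rw [Finset.sum_congr rfl per, Finset.sum_sub_distrib]
      congr 1
      rw [← Finset.mul_sum]
      congr 1
      have fix : ∀ n ∈ Finset.range N,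
          ∑ k ∈ Finset.range (n+1), ∑ l ∈ Finset.range (n+1-k),
            (c k * c l * c (n-k-l)) * (x⁻¹)^(3*n+3)
          = ∑ k ∈ Finset.range (n+1), ∑ l ∈ Finset.range (n+1-k),
            c k * c l * c (n-k-l) * (x⁻¹)^(3*(k+l+(n-k-l))+3) := by
        intro n _
        refine Finset.sum_congr rfl fun k hk => Finset.sum_congr rfl fun l hl => ?_
        simp only [Finset.mem_range] at hk hl
        congr 2
        omega
      rw [Finset.sum_congr rfl fix]
      exact triple_reindex N (fun k l m => c k * c l * c m * (x⁻¹)^(3*(k+l+m)+3))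
    have split : ∑ k ∈ Finset.range (N+1), ∑ l ∈ Finset.range (N+1), ∑ m ∈ Finset.range (N+1),
          c k * c l * c m * (x⁻¹)^(3*(k+l+m)+3)
        = (∑ k ∈ Finset.range (N+1), ∑ l ∈ Finset.range (N+1), ∑ m ∈ Finset.range (N+1),
            (if k+l+m < N then c k * c l * c m * (x⁻¹)^(3*(k+l+m)+3) else 0))
          + ∑ k ∈ Finset.range (N+1), ∑ l ∈ Finset.range (N+1), ∑ m ∈ Finset.range (N+1),
            (if N ≤ k+l+m then c k * c l * c m * (x⁻¹)^(3*(k+l+m)+3) else 0) := by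
      simp only [← Finset.sum_add_distrib]
      refine Finset.sum_congr rfl fun k _ => Finset.sum_congr rfl fun l _ =>
        Finset.sum_congr rfl fun m _ => ?_
      by_cases h : k+l+m < N
      · rw [if_pos h, if_neg (by omega)]; ring
      · rw [if_neg h, if_pos (by omega)]; ring
    rw [E2, E1, E3, split]
    simp only [hg2_def]
    rw [Finset.sum_range_succ]
    ring
  rw [isBigO_iff]
  refine ⟨((3*(N:ℝ)+1)*(3*(N:ℝ)+2)) * |c N|
      + 2 * ∑ k ∈ Finset.range (N+1), ∑ l ∈ Finset.range (N+1), ∑ m ∈ Finset.range (N+1),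
          |c k * c l * c m|, ?_⟩
  filter_upwards [eventually_ge_atTop (1:ℝ)] with x hx1
  have hx0 : (0:ℝ) < x := lt_of_lt_of_le zero_lt_one hx1
  have hxne : x ≠ 0 := ne_of_gt hx0
  have hv0 : (0:ℝ) ≤ x⁻¹ := by positivity
  have hv1 : x⁻¹ ≤ 1 := inv_le_one_of_one_le₀ hx1
  rw [Real.norm_eq_abs, Real.norm_eq_abs, hderiv2 x hxne, hBg, key x hxne]
  have hnorm : |(1:ℝ) / x ^ (3*N+3)| = (x⁻¹)^(3*N+3) := by
    rw [one_div, ← inv_pow, abs_of_nonneg (by positivity)]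
  rw [hnorm]
  have hT : |∑ k ∈ Finset.range (N+1), ∑ l ∈ Finset.range (N+1), ∑ m ∈ Finset.range (N+1),
        (if N ≤ k+l+m then c k * c l * c m * (x⁻¹)^(3*(k+l+m)+3) else 0)|
      ≤ (∑ k ∈ Finset.range (N+1), ∑ l ∈ Finset.range (N+1), ∑ m ∈ Finset.range (N+1),
          |c k * c l * c m|) * (x⁻¹)^(3*N+3) := by
    rw [Finset.sum_mul]
    refine (Finset.abs_sum_le_sum_abs _ _).trans (Finset.sum_le_sum fun k _ => ?_)
    rw [Finset.sum_mul]
    refine (Finset.abs_sum_le_sum_abs _ _).trans (Finset.sum_le_sum fun l _ => ?_)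
    rw [Finset.sum_mul]
    refine (Finset.abs_sum_le_sum_abs _ _).trans (Finset.sum_le_sum fun m _ => ?_)
    by_cases h : N ≤ k+l+m
    · rw [if_pos h, abs_mul, abs_of_nonneg (pow_nonneg hv0 _)]
      exact mul_le_mul_of_nonneg_left (pow_le_pow_of_le_one hv0 hv1 (by omega)) (abs_nonneg _)
    · rw [if_neg h, abs_zero]
      positivity
  have hA : |((3*(N:ℝ)+1)*(3*(N:ℝ)+2)) * c N * (x⁻¹)^(3*N+3)|
      = ((3*(N:ℝ)+1)*(3*(N:ℝ)+2)) * |c N| * (x⁻¹)^(3*N+3) := by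
    rw [abs_mul, abs_mul, abs_of_nonneg (pow_nonneg hv0 _),
      abs_of_nonneg (show (0:ℝ) ≤ (3*(N:ℝ)+1)*(3*(N:ℝ)+2) by positivity)]
  calc |((3*(N:ℝ)+1)*(3*(N:ℝ)+2)) * c N * (x⁻¹)^(3*N+3)
        - 2 * ∑ k ∈ Finset.range (N+1), ∑ l ∈ Finset.range (N+1), ∑ m ∈ Finset.range (N+1),
            (if N ≤ k+l+m then c k * c l * c m * (x⁻¹)^(3*(k+l+m)+3) else 0)|
      ≤ |((3*(N:ℝ)+1)*(3*(N:ℝ)+2)) * c N * (x⁻¹)^(3*N+3)|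
        + |2 * ∑ k ∈ Finset.range (N+1), ∑ l ∈ Finset.range (N+1), ∑ m ∈ Finset.range (N+1),
            (if N ≤ k+l+m then c k * c l * c m * (x⁻¹)^(3*(k+l+m)+3) else 0)| :=
        abs_sub _ _
    _ ≤ ((3*(N:ℝ)+1)*(3*(N:ℝ)+2)) * |c N| * (x⁻¹)^(3*N+3)
        + 2 * ((∑ k ∈ Finset.range (N+1), ∑ l ∈ Finset.range (N+1), ∑ m ∈ Finset.range (N+1),
            |c k * c l * c m|) * (x⁻¹)^(3*N+3)) := by
        rw [hA, abs_mul (2:ℝ), abs_two]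
        exact add_le_add le_rfl (by linarith [hT])
    _ = (((3*(N:ℝ)+1)*(3*(N:ℝ)+2)) * |c N|
        + 2 * ∑ k ∈ Finset.range (N+1), ∑ l ∈ Finset.range (N+1), ∑ m ∈ Finset.range (N+1),
            |c k * c l * c m|) * (x⁻¹)^(3*N+3) := by ring
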